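/- The only function g : (ℤ/pℤ)ˣ → {±1} whose Gauss sum τ(g) = ∑_{a ∈ (ℤ/pℤ)ˣ} g(a)e^{2πia/p} equals 1 is the constant function g ≡ -1. -/

import Mathlib

/-!
Let `ζ = exp (2πi/p)` and `S = {a | g a = 1}`. Since `g = 2·𝟙_S - 1` and the nonzero powers
of `ζ` sum to `-1`, the Gauss sum equals `2 ∑_{a ∈ S} ζ^a + 1`; so it is `1` iff
`∑_{a ∈ S} ζ^a = 0`. A nonempty sum of distinct powers `ζ^a` with `0 < a < p` cannot vanish:
after dividing by `ζ` it is the value at `ζ` of a nonzero rational polynomial of degree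
`< p - 1`, while the minimal polynomial of `ζ` over `ℚ` is the cyclotomic polynomial `Φ_p`,
of degree `p - 1`.
-/

open Polynomial Finset

theorem IsPrimitiveRoot.sum_pow_ne_zero {K : Type*} [Field K] [CharZero K] {n : ℕ} {ζ : K}
    (hζ : IsPrimitiveRoot ζ n) {s : Finset ℕ} (hs : ∀ i ∈ s, i < n.totient)
    (hne : s.Nonempty) : ∑ i ∈ s, ζ ^ i ≠ 0 := by
  intro h
  obtain ⟨i₀, hi₀⟩ := hne
  have hn : 0 < n := Nat.totient_pos.mp ((Nat.zero_le i₀).trans_lt (hs i₀ hi₀))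
  set Q : ℚ[X] := ∑ i ∈ s, X ^ i
  have hQ : Q ≠ 0 := fun hQ => by
    simpa [Q, finsetSum_coeff, coeff_X_pow, hi₀] using congrArg (coeff · i₀) hQ
  have hdeg : Q.degree < n.totient :=
    (degree_sum_le _ _).trans_lt <| (Finset.sup_lt_iff (WithBot.bot_lt_coe _)).2 fun i hi => by
      simpa using hs i hi
  have hmin : (minpoly ℚ ζ).degree = n.totient := by
    rw [← cyclotomic_eq_minpoly_rat hζ hn, degree_cyclotomic]
  refine (minpoly.degree_le_of_ne_zero ℚ ζ hQ ?_).not_gt (hmin ▸ hdeg)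
  simpa [Q] using h

theorem Fintype.sum_units_eq_sum_sub {G₀ M : Type*} [GroupWithZero G₀] [Fintype G₀]
    [DecidableEq G₀] [AddCommGroup M] (f : G₀ → M) :
    ∑ a : G₀ˣ, f a = ∑ x, f x - f 0 := by
  rw [Fintype.sum_eq_add_sum_compl (0 : G₀), add_sub_cancel_left,
    ← Fintype.sum_equiv unitsEquivNeZero.symm (fun x => f x) _ fun _ => rfl]
  exact (Finset.sum_subtype _ (fun x => by simp) f).symm

namespace ZMod

variable {N : ℕ} [NeZero N]

theorem isPrimitiveRoot_stdAddChar_one : IsPrimitiveRoot (stdAddChar (1 : ZMod N)) N := by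
  have h := stdAddChar_coe (N := N) 1
  rw [Int.cast_one] at h
  simpa [h] using Complex.isPrimitiveRoot_exp N (NeZero.ne N)

theorem stdAddChar_eq_pow_val (x : ZMod N) :
    stdAddChar x = stdAddChar (1 : ZMod N) ^ x.val := by
  rw [← AddChar.map_nsmul_eq_pow, nsmul_one, natCast_zmod_val]

theorem sum_stdAddChar_units (p : ℕ) [Fact p.Prime] :
    ∑ a : (ZMod p)ˣ, stdAddChar (a : ZMod p) = -1 := by
  have hψ : (stdAddChar : AddChar (ZMod p) ℂ) ≠ 0 := fun h => by
    simpa [h] using isPrimitiveRoot_stdAddChar_one.ne_one (Fact.out : p.Prime).one_lt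
  rw [Fintype.sum_units_eq_sum_sub (fun x => stdAddChar x), AddChar.sum_eq_zero_iff_ne_zero.2 hψ,
    AddChar.map_zero_eq_one, zero_sub]

theorem sum_stdAddChar_eq_zero_iff {p : ℕ} [Fact p.Prime] {s : Finset (ZMod p)} (h0 : 0 ∉ s) :
    ∑ x ∈ s, stdAddChar x = 0 ↔ s = ∅ := by
  refine ⟨fun h => ?_, fun h => h ▸ sum_empty⟩
  by_contra hs
  set ζ := stdAddChar (1 : ZMod p)
  have hζ : IsPrimitiveRoot ζ p := isPrimitiveRoot_stdAddChar_one
  have hval : ∀ x ∈ s, x.val ≠ 0 := fun x hx => by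
    rw [Ne, val_eq_zero]; exact ne_of_mem_of_not_mem hx h0
  have hshift : ∑ x ∈ s, stdAddChar x = ζ * ∑ i ∈ s.image (fun x => x.val - 1), ζ ^ i := by
    rw [sum_image fun x hx y hy hxy => val_injective p <| by
      have := hval x hx; have := hval y hy; omega, mul_sum]
    refine sum_congr rfl fun x hx => ?_
    rw [stdAddChar_eq_pow_val, ← pow_succ',
      Nat.sub_add_cancel (Nat.pos_of_ne_zero (hval x hx))]
  refine mul_ne_zero (hζ.ne_zero (NeZero.ne p)) (hζ.sum_pow_ne_zero ?_ ?_) (hshift ▸ h)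
  · simp only [mem_image, forall_exists_index, and_imp, forall_apply_eq_imp_iff₂,
      Nat.totient_prime Fact.out]
    exact fun x _ => Nat.sub_lt_sub_right (Nat.pos_of_ne_zero (hval x ‹_›)) (val_lt x)
  · exact (nonempty_iff_ne_empty.2 hs).image _

end ZMod

/-- The only function `g : (ℤ/pℤ)ˣ → {±1}` with Gauss sum equal to `1` is the constant
function `g ≡ -1`. -/
theorem stmt_11 (p : ℕ) [Fact p.Prime]
    (g : (ZMod p)ˣ → ℂ) (hg : ∀ a : (ZMod p)ˣ, g a = 1 ∨ g a = -1) :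
    (∑ a : (ZMod p)ˣ,
        g a * Complex.exp (2 * Real.pi * Complex.I * ((a : ZMod p).val : ℂ) / p)) = 1
    ↔ ∀ a : (ZMod p)ˣ, g a = -1 := by
  simp_rw [← ZMod.toCircle_apply, ← ZMod.stdAddChar_apply]
  set ψ : AddChar (ZMod p) ℂ := ZMod.stdAddChar
  set S := univ.filter fun a => g a = 1
  have hτ : ∑ a : (ZMod p)ˣ, g a * ψ a = 2 * ∑ a ∈ S, ψ a + 1 := by
    calc _ = 2 * ∑ a ∈ S, ψ a - ∑ a : (ZMod p)ˣ, ψ a := by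
          rw [sum_filter, mul_sum, ← sum_sub_distrib]
          exact sum_congr rfl fun a _ => by rcases hg a with h | h <;> norm_num [h, two_mul]
      _ = _ := by rw [ZMod.sum_stdAddChar_units]; ring
  have hS : ∑ a ∈ S, ψ a = 0 ↔ S = ∅ := by
    have h := ZMod.sum_stdAddChar_eq_zero_iff (s := S.map ⟨_, Units.val_injective⟩) (by simp)
    rwa [sum_map, map_eq_empty] at h
  rw [hτ, add_eq_right, mul_eq_zero, or_iff_right two_ne_zero, hS, filter_eq_empty_iff]
  exact forall_congr' fun a => by rcases hg a with h | h <;> norm_num [h]
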